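/- Let k be an odd positive integer and χ : ℚ* → ℂ* a group homomorphism such that a ↦ χ(a²)/a^k is injective on ℚ*. Then the map ρ sending a matrix [[a,b],[c,d]] ∈ GL(2,ℚ) to the birational transformation (x,y) ↦ (x·χ(ad−bc)/(cy+d)^k, (ay+b)/(cy+d)) of ℂ² is an injective group homomorphism from GL(2,ℚ) into the group of birational maps of the plane. -/

import Mathlib

lemma rho_comp_aux (k : ℕ) (a b c d a' b' c' d' u v x y : ℂ)
    (hB : c' * y + d' ≠ 0)
    (hAB : (c * a' + d * c') * y + (c * b' + d * d') ≠ 0) :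
    (x * (u * v) / ((c * a' + d * c') * y + (c * b' + d * d')) ^ k,
      ((a * a' + b * c') * y + (a * b' + b * d')) /
        ((c * a' + d * c') * y + (c * b' + d * d'))) =
    ((x * v / (c' * y + d') ^ k) * u /
        (c * ((a' * y + b') / (c' * y + d')) + d) ^ k,
      (a * ((a' * y + b') / (c' * y + d')) + b) /
        (c * ((a' * y + b') / (c' * y + d')) + d)) := by
  have hden : c * ((a' * y + b') / (c' * y + d')) + d
      = ((c * a' + d * c') * y + (c * b' + d * d')) / (c' * y + d') := by
    rw [mul_div_assoc', div_add' _ _ _ hB]; congr 1; ring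
  have hnum : a * ((a' * y + b') / (c' * y + d')) + b
      = ((a * a' + b * c') * y + (a * b' + b * d')) / (c' * y + d') := by
    rw [mul_div_assoc', div_add' _ _ _ hB]; congr 1; ring
  rw [hden, hnum]
  refine Prod.ext ?_ ?_ <;> simp only []
  · rw [div_pow, div_div_eq_mul_div, div_mul_eq_mul_div, div_mul_eq_mul_div, div_div]
    rw [div_eq_div_iff (pow_ne_zero k hAB)
      (mul_ne_zero (pow_ne_zero k hB) (pow_ne_zero k hAB))]
    ring
  · rw [div_div_eq_mul_div, div_mul_eq_mul_div, div_div]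
    rw [div_eq_div_iff hAB (mul_ne_zero hB hAB)]
    ring

/-- The birational transformation of `ℂ²` associated to `A = [[a,b],[c,d]] ∈ GL(2,ℚ)`:
`(x,y) ↦ (x·χ(ad−bc)/(cy+d)^k, (ay+b)/(cy+d))`. -/
noncomputable def rho (k : ℕ) (χ : ℚˣ →* ℂˣ)
    (A : Matrix.GeneralLinearGroup (Fin 2) ℚ) : ℂ × ℂ → ℂ × ℂ :=
  fun p =>
    (p.1 * ((χ (Matrix.GeneralLinearGroup.det A) : ℂˣ) : ℂ) /
        (((A : Matrix (Fin 2) (Fin 2) ℚ) 1 0 : ℂ) * p.2 +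
          ((A : Matrix (Fin 2) (Fin 2) ℚ) 1 1 : ℂ)) ^ k,
      (((A : Matrix (Fin 2) (Fin 2) ℚ) 0 0 : ℂ) * p.2 +
          ((A : Matrix (Fin 2) (Fin 2) ℚ) 0 1 : ℂ)) /
        (((A : Matrix (Fin 2) (Fin 2) ℚ) 1 0 : ℂ) * p.2 +
          ((A : Matrix (Fin 2) (Fin 2) ℚ) 1 1 : ℂ)))

lemma rho_comp (k : ℕ) (χ : ℚˣ →* ℂˣ)
    (A B : Matrix.GeneralLinearGroup (Fin 2) ℚ) (x y : ℂ)
    (hB : ((B : Matrix (Fin 2) (Fin 2) ℚ) 1 0 : ℂ) * y + ((B : Matrix (Fin 2) (Fin 2) ℚ) 1 1 : ℂ) ≠ 0)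
    (hAB : (((A * B : Matrix.GeneralLinearGroup (Fin 2) ℚ) : Matrix (Fin 2) (Fin 2) ℚ) 1 0 : ℂ) * y +
          (((A * B : Matrix.GeneralLinearGroup (Fin 2) ℚ) : Matrix (Fin 2) (Fin 2) ℚ) 1 1 : ℂ) ≠ 0) :
    rho k χ (A * B) (x, y) = rho k χ A (rho k χ B (x, y)) := by
  have hm : ∀ i j : Fin 2,
      (((A * B : Matrix.GeneralLinearGroup (Fin 2) ℚ) : Matrix (Fin 2) (Fin 2) ℚ) i j : ℂ)
      = ((A : Matrix (Fin 2) (Fin 2) ℚ) i 0 : ℂ) * ((B : Matrix (Fin 2) (Fin 2) ℚ) 0 j : ℂ)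
        + ((A : Matrix (Fin 2) (Fin 2) ℚ) i 1 : ℂ) * ((B : Matrix (Fin 2) (Fin 2) ℚ) 1 j : ℂ) := by
    intro i j
    rw [show ((A * B : Matrix.GeneralLinearGroup (Fin 2) ℚ) : Matrix (Fin 2) (Fin 2) ℚ)
        = (A : Matrix (Fin 2) (Fin 2) ℚ) * (B : Matrix (Fin 2) (Fin 2) ℚ) from rfl,
      Matrix.mul_apply, Fin.sum_univ_two]
    push_cast
    ring
  have hdet : ((χ (Matrix.GeneralLinearGroup.det (A * B)) : ℂˣ) : ℂ)
      = ((χ (Matrix.GeneralLinearGroup.det A) : ℂˣ) : ℂ)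
        * ((χ (Matrix.GeneralLinearGroup.det B) : ℂˣ) : ℂ) := by
    rw [map_mul, map_mul, Units.val_mul]
  rw [hm, hm] at hAB
  simp only [rho, hm, hdet]
  exact rho_comp_aux k _ _ _ _ _ _ _ _ _ _ x y hB hAB

lemma rho_one (k : ℕ) (χ : ℚˣ →* ℂˣ) (x y : ℂ) : rho k χ 1 (x, y) = (x, y) := by
  have h1 : ((1 : Matrix.GeneralLinearGroup (Fin 2) ℚ) : Matrix (Fin 2) (Fin 2) ℚ) = 1 := rfl
  simp [rho, h1, Matrix.one_apply]

lemma affine_finite (α β : ℂ) (h : ¬(α = 0 ∧ β = 0)) : {y : ℂ | α * y + β = 0}.Finite := by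
  rcases eq_or_ne α 0 with hα | hα
  · have hβ : β ≠ 0 := fun hb => h ⟨hα, hb⟩
    convert Set.finite_empty
    ext y; simp [hα, hβ]
  · apply Set.Finite.subset (Set.finite_singleton (-β / α))
    intro y hy
    simp only [Set.mem_setOf_eq] at hy
    simp only [Set.mem_singleton_iff]
    field_simp
    linear_combination hy

lemma row_ne (C : Matrix.GeneralLinearGroup (Fin 2) ℚ) :
    ¬(((C : Matrix (Fin 2) (Fin 2) ℚ) 1 0 : ℂ) = 0 ∧ ((C : Matrix (Fin 2) (Fin 2) ℚ) 1 1 : ℂ) = 0) := by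
  rintro ⟨h1, h2⟩
  have hc : (C : Matrix (Fin 2) (Fin 2) ℚ) 1 0 = 0 := by exact_mod_cast h1
  have hd : (C : Matrix (Fin 2) (Fin 2) ℚ) 1 1 = 0 := by exact_mod_cast h2
  have hdet : ((Matrix.GeneralLinearGroup.det C : ℚˣ) : ℚ) ≠ 0 := Units.ne_zero _
  rw [Matrix.GeneralLinearGroup.val_det_apply, Matrix.det_fin_two, hc, hd] at hdet
  simp at hdet

lemma eq_one_of_rho_id (k : ℕ) (χ : ℚˣ →* ℂˣ)
    (hχ : Function.Injective fun a : ℚˣ => ((χ (a ^ 2) : ℂˣ) : ℂ) / ((a : ℚ) : ℂ) ^ k)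
    (C : Matrix.GeneralLinearGroup (Fin 2) ℚ) (G : Set ℂ) (hGinf : G.Infinite)
    (hG : ∀ y ∈ G, ((C : Matrix (Fin 2) (Fin 2) ℚ) 1 0 : ℂ) * y + ((C : Matrix (Fin 2) (Fin 2) ℚ) 1 1 : ℂ) ≠ 0)
    (hid : ∀ y ∈ G, ∀ x : ℂ, rho k χ C (x, y) = (x, y)) : C = 1 := by
  set a := (C : Matrix (Fin 2) (Fin 2) ℚ) 0 0 with ha_def
  set b := (C : Matrix (Fin 2) (Fin 2) ℚ) 0 1 with hb_def
  set c := (C : Matrix (Fin 2) (Fin 2) ℚ) 1 0 with hc_def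
  set d := (C : Matrix (Fin 2) (Fin 2) ℚ) 1 1 with hd_def
  have hq : ∀ y ∈ G, (c : ℂ) * y ^ 2 + ((d : ℂ) - (a : ℂ)) * y - (b : ℂ) = 0 := by
    intro y hy
    have h2 := congrArg Prod.snd (hid y hy 0)
    simp only [rho] at h2
    rw [div_eq_iff (hG y hy)] at h2
    linear_combination -h2
  set p : Polynomial ℂ := Polynomial.C (c : ℂ) * Polynomial.X ^ 2
      + Polynomial.C ((d : ℂ) - (a : ℂ)) * Polynomial.X + Polynomial.C (-(b : ℂ)) with hp_def
  have hproot : ∀ y ∈ G, p.IsRoot y := by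
    intro y hy
    simp only [Polynomial.IsRoot, hp_def, Polynomial.eval_add, Polynomial.eval_mul,
      Polynomial.eval_pow, Polynomial.eval_C, Polynomial.eval_X]
    linear_combination hq y hy
  have hp0 : p = 0 := Polynomial.eq_zero_of_infinite_isRoot p (hGinf.mono hproot)
  have hev : ∀ t : ℂ, (c : ℂ) * t ^ 2 + ((d : ℂ) - (a : ℂ)) * t + (-(b : ℂ)) = 0 := by
    intro t
    have := congrArg (Polynomial.eval t) hp0
    simpa [hp_def] using this
  have hb0 : (b : ℂ) = 0 := by linear_combination -(hev 0)
  have hc0 : (c : ℂ) = 0 := by linear_combination (hev 1) / 2 + (hev (-1)) / 2 - hev 0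
  have hda0 : (d : ℂ) = (a : ℂ) := by linear_combination (hev 1) / 2 - (hev (-1)) / 2
  have hb : b = 0 := by exact_mod_cast hb0
  have hc : c = 0 := by exact_mod_cast hc0
  have hda : d = a := by exact_mod_cast hda0
  have hdetval : ((Matrix.GeneralLinearGroup.det C : ℚˣ) : ℚ) = a * a := by
    rw [Matrix.GeneralLinearGroup.val_det_apply, Matrix.det_fin_two, ← ha_def, ← hb_def,
      ← hc_def, ← hd_def, hb, hc, hda]
    ring
  have ha0 : a ≠ 0 := by
    intro h
    exact Units.ne_zero (Matrix.GeneralLinearGroup.det C) (by rw [hdetval, h, mul_zero])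
  have hane : (a : ℂ) ≠ 0 := by exact_mod_cast ha0
  obtain ⟨y₀, hy₀⟩ := hGinf.nonempty
  have h1 := congrArg Prod.fst (hid y₀ hy₀ 1)
  simp only [rho] at h1
  rw [hc0, hda0, zero_mul, zero_add, one_mul,
    div_eq_one_iff_eq (pow_ne_zero _ hane)] at h1
  set au : ℚˣ := Units.mk0 a ha0 with hau_def
  have hδu : Matrix.GeneralLinearGroup.det C = au ^ 2 := by
    apply Units.ext
    rw [hdetval]
    simp [hau_def, pow_two]
  have heq : (fun a : ℚˣ => ((χ (a ^ 2) : ℂˣ) : ℂ) / ((a : ℚ) : ℂ) ^ k) au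
      = (fun a : ℚˣ => ((χ (a ^ 2) : ℂˣ) : ℂ) / ((a : ℚ) : ℂ) ^ k) 1 := by
    simp only [hau_def, Units.val_mk0, one_pow, map_one, Units.val_one, Rat.cast_one]
    rw [← hau_def, ← hδu, h1, div_self (pow_ne_zero _ hane)]
    simp
  have hau1 : au = 1 := hχ heq
  have ha1 : a = 1 := by
    have := congrArg Units.val hau1
    simpa [hau_def] using this
  have hmat : (C : Matrix (Fin 2) (Fin 2) ℚ) = 1 := by
    ext i j
    fin_cases i <;> fin_cases j <;>
      simp [Matrix.one_apply, ← ha_def, ← hb_def, ← hc_def, ← hd_def, ha1, hb, hc, hda]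
  exact Units.ext hmat

/-- for `k` odd positive and `χ : ℚ* → ℂ*` with `a ↦ χ(a²)/a^k`
injective, `ρ` is an injective group homomorphism from `GL(2,ℚ)` into the group
of birational maps of the plane (group law = generic composition, equality =
generic equality). -/
theorem stmt13 (k : ℕ) (hk : Odd k) (hkpos : 0 < k) (χ : ℚˣ →* ℂˣ)
    (hχ : Function.Injective fun a : ℚˣ => ((χ (a ^ 2) : ℂˣ) : ℂ) / ((a : ℚ) : ℂ) ^ k) :
    (∀ A B : Matrix.GeneralLinearGroup (Fin 2) ℚ, ∀ x y : ℂ,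
        ((B : Matrix (Fin 2) (Fin 2) ℚ) 1 0 : ℂ) * y + ((B : Matrix (Fin 2) (Fin 2) ℚ) 1 1 : ℂ) ≠ 0 →
        (((A * B : Matrix.GeneralLinearGroup (Fin 2) ℚ) : Matrix (Fin 2) (Fin 2) ℚ) 1 0 : ℂ) * y +
          (((A * B : Matrix.GeneralLinearGroup (Fin 2) ℚ) : Matrix (Fin 2) (Fin 2) ℚ) 1 1 : ℂ) ≠ 0 →
        rho k χ (A * B) (x, y) = rho k χ A (rho k χ B (x, y))) ∧
    (∀ A B : Matrix.GeneralLinearGroup (Fin 2) ℚ,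
        (∀ x y : ℂ,
          ((A : Matrix (Fin 2) (Fin 2) ℚ) 1 0 : ℂ) * y + ((A : Matrix (Fin 2) (Fin 2) ℚ) 1 1 : ℂ) ≠ 0 →
          ((B : Matrix (Fin 2) (Fin 2) ℚ) 1 0 : ℂ) * y + ((B : Matrix (Fin 2) (Fin 2) ℚ) 1 1 : ℂ) ≠ 0 →
          rho k χ A (x, y) = rho k χ B (x, y)) → A = B) := by
  refine ⟨fun A B x y hB hAB => rho_comp k χ A B x y hB hAB, ?_⟩
  intro A B hAB2
  set G : Set ℂ := {y : ℂ |
    (((A : Matrix (Fin 2) (Fin 2) ℚ) 1 0 : ℂ) * y + ((A : Matrix (Fin 2) (Fin 2) ℚ) 1 1 : ℂ) ≠ 0) ∧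
    (((B : Matrix (Fin 2) (Fin 2) ℚ) 1 0 : ℂ) * y + ((B : Matrix (Fin 2) (Fin 2) ℚ) 1 1 : ℂ) ≠ 0) ∧
    ((((A⁻¹ * B : Matrix.GeneralLinearGroup (Fin 2) ℚ) : Matrix (Fin 2) (Fin 2) ℚ) 1 0 : ℂ) * y +
      (((A⁻¹ * B : Matrix.GeneralLinearGroup (Fin 2) ℚ) : Matrix (Fin 2) (Fin 2) ℚ) 1 1 : ℂ) ≠ 0)} with hG_def
  have hGinf : G.Infinite := by
    apply Set.infinite_of_finite_compl
    apply Set.Finite.subset (((affine_finite _ _ (row_ne A)).union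
      (affine_finite _ _ (row_ne B))).union (affine_finite _ _ (row_ne (A⁻¹ * B))))
    intro y hy
    simp only [hG_def, Set.mem_compl_iff, Set.mem_setOf_eq, not_and_or, not_ne_iff] at hy
    simp only [Set.mem_union, Set.mem_setOf_eq]
    tauto
  have hone : (((1 : Matrix.GeneralLinearGroup (Fin 2) ℚ) : Matrix (Fin 2) (Fin 2) ℚ) 1 0 : ℂ) * 0 +
      (((1 : Matrix.GeneralLinearGroup (Fin 2) ℚ) : Matrix (Fin 2) (Fin 2) ℚ) 1 1 : ℂ) ≠ 0 := by
    rw [show ((1 : Matrix.GeneralLinearGroup (Fin 2) ℚ) : Matrix (Fin 2) (Fin 2) ℚ) = 1 from rfl]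
    simp [Matrix.one_apply]
  have hid : ∀ y ∈ G, ∀ x : ℂ, rho k χ (A⁻¹ * B) (x, y) = (x, y) := by
    rintro y ⟨hA, hB, hC⟩ x
    have honey : ∀ y' : ℂ,
        (((A⁻¹ * A : Matrix.GeneralLinearGroup (Fin 2) ℚ) : Matrix (Fin 2) (Fin 2) ℚ) 1 0 : ℂ) * y' +
        (((A⁻¹ * A : Matrix.GeneralLinearGroup (Fin 2) ℚ) : Matrix (Fin 2) (Fin 2) ℚ) 1 1 : ℂ) ≠ 0 := by
      intro y'
      rw [inv_mul_cancel,
        show ((1 : Matrix.GeneralLinearGroup (Fin 2) ℚ) : Matrix (Fin 2) (Fin 2) ℚ) = 1 from rfl]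
      simp [Matrix.one_apply]
    have e1 : rho k χ (A⁻¹ * B) (x, y) = rho k χ A⁻¹ (rho k χ B (x, y)) :=
      rho_comp k χ A⁻¹ B x y hB hC
    have e2 : rho k χ (A⁻¹ * A) (x, y) = rho k χ A⁻¹ (rho k χ A (x, y)) :=
      rho_comp k χ A⁻¹ A x y hA (honey y)
    rw [e1, ← hAB2 x y hA hB, ← e2, inv_mul_cancel, rho_one]
  exact inv_mul_eq_one.mp
    (eq_one_of_rho_id k χ hχ (A⁻¹ * B) G hGinf (fun y hy => hy.2.2) hid)
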